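/- For each p ∈ {1, …, n−1}, the open convex set ∩_{i=1}^p {α_i > 0} ∩ ∩_{i=p+1}^n {α_i < 0} is nonempty and equals the chamber of A containing the open segment {(x, 0) : a_p < x < a_{p+1}}. Moreover, ∩_{i=1}^n {α_i < 0} is the chamber of A containing the origin, and ∩_{i=1}^n {α_i > 0} is the chamber of A containing every point (x, 0) with x > a_n. -/

import Mathlib

open scoped Classical

noncomputable section

abbrev Pt : Type := ℝ × ℝ

/-- An affine-linear functional `a*x + b*y + c` on `ℝ²` with nonzero linear part. -/
structure AffForm : Type where
  a : ℝ
  b : ℝ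
  c : ℝ
  nondeg : a ≠ 0 ∨ b ≠ 0

namespace AffForm

def eval (f : AffForm) (p : Pt) : ℝ := f.a * p.1 + f.b * p.2 + f.c

def line (f : AffForm) : Set Pt := {p | f.eval p = 0}

def Parallel (f g : AffForm) : Prop := f.a * g.b = f.b * g.a

end AffForm

variable {n : ℕ}

/-- An arrangement: at least two distinct affine lines, not all parallel. -/
def IsArrangement (α : Fin n → AffForm) : Prop :=
  2 ≤ n ∧ (∀ i j : Fin n, i ≠ j → (α i).line ≠ (α j).line) ∧
    ∃ i j : Fin n, ¬ (α i).Parallel (α j)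

def complement (α : Fin n → AffForm) : Set Pt := {p | ∀ i, (α i).eval p ≠ 0}

/-- A chamber: a connected component of the complement of the union of the lines. -/
def IsChamber (α : Fin n → AffForm) (C : Set Pt) : Prop :=
  ∃ p ∈ complement α, C = connectedComponentIn (complement α) p

/-- `Sep(C, C')`: the set of indices `i` such that `α i` is positive on one of `C, C'`
and negative on the other. -/
def SepSet (α : Fin n → AffForm) (C C' : Set Pt) : Finset (Fin n) :=
  Finset.univ.filter fun i =>
    ((∀ p ∈ C, 0 < (α i).eval p) ∧ (∀ p ∈ C', (α i).eval p < 0)) ∨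
    ((∀ p ∈ C, (α i).eval p < 0) ∧ (∀ p ∈ C', 0 < (α i).eval p))

/-- `Δ(C, C') = ∏_{i ∈ Sep(C,C')} r i − ∏_{i ∈ Sep(C,C')} (r i)⁻¹`. -/
def Delta (α : Fin n → AffForm) (r : Fin n → ℂ) (C C' : Set Pt) : ℂ :=
  (∏ i ∈ SepSet α C C', r i) - ∏ i ∈ SepSet α C C', (r i)⁻¹

/-- The open strip between two parallel lines `f.line` and `g.line`. -/
def Strip (f g : AffForm) : Set Pt :=
  {p | ∀ q ∈ g.line,
    (0 < f.eval p ∧ f.eval p < f.eval q) ∨ (f.eval q < f.eval p ∧ f.eval p < 0)}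

/-- A band: the open strip between two parallel lines of the arrangement containing no
other line of the arrangement parallel to them. -/
def IsBand (α : Fin n → AffForm) (B : Set Pt) : Prop :=
  ∃ i j : Fin n, i ≠ j ∧ (α i).Parallel (α j) ∧ B = Strip (α i) (α j) ∧
    ∀ k : Fin n, (α k).Parallel (α i) → (α k).line ∩ B = ∅

/-- The data of a band `B` bounded by the parallel lines `H i` and `H j`, together with its
two unbounded chambers `U1` (= `U_1(B)`) and `U2` (= `U_2(B)`). -/
def BandData (α : Fin n → AffForm) (i j : Fin n) (B U1 U2 : Set Pt) : Prop :=
  i ≠ j ∧ (α i).Parallel (α j) ∧ B = Strip (α i) (α j) ∧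
  (∀ k : Fin n, (α k).Parallel (α i) → (α k).line ∩ B = ∅) ∧
  IsChamber α U1 ∧ IsChamber α U2 ∧ U1 ⊆ B ∧ U2 ⊆ B ∧
  ¬ Bornology.IsBounded U1 ∧ ¬ Bornology.IsBounded U2 ∧ U1 ≠ U2

/-- Coordinates as in the paper: every intersection point of two lines has `x₂ > 0`, line
`H i` meets the `x₁`-axis exactly at `(a i, 0)` with `0 < a 1 < … < a n`, and each
`α i` is negative at the origin. -/
def GoodCoords (α : Fin n → AffForm) (a : Fin n → ℝ) : Prop :=
  (∀ i j : Fin n, i ≠ j → ∀ p : Pt, p ∈ (α i).line → p ∈ (α j).line → 0 < p.2) ∧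
  (∀ i : Fin n, (α i).line ∩ {p : Pt | p.2 = 0} = {((a i : ℝ), (0 : ℝ))}) ∧
  StrictMono a ∧ (∀ i : Fin n, 0 < a i) ∧ ∀ i : Fin n, (α i).eval (0, 0) < 0

/-- `Upos α p = ∩_{i ≤ p} {α_i > 0} ∩ ∩_{i > p} {α_i < 0}` in the 1-indexed convention of
the paper: for `1 ≤ p ≤ n-1` it is the chamber `U_p`, `Upos α 0 = U_0`, and
`Upos α n = U_0^∨`. -/
def Upos (α : Fin n → AffForm) (p : ℕ) : Set Pt :=
  {x : Pt | ∀ i : Fin n, if (i : ℕ) < p then 0 < (α i).eval x else (α i).eval x < 0}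

/-- `ch²(A)`: the chambers other than `U_0, U_1, …, U_{n-1}, U_0^∨`. -/
def ch2 (α : Fin n → AffForm) (chambers : Finset (Set Pt)) : Finset (Set Pt) :=
  chambers.filter fun C => ∀ p ≤ n, C ≠ Upos α p

/-- `d([U_p]) = −Σ_{C ∈ ch², α_p > 0, α_{p+1} < 0 on C} Δ(U_p, C)·[C]
+ Σ_{C ∈ ch², α_p < 0, α_{p+1} > 0 on C} Δ(U_p, C)·[C]`, where `i`, `j` are the indices of
the lines `H_p`, `H_{p+1}` bounding `U_p` and `U = U_p`. -/
def dChain (α : Fin n → AffForm) (chambers : Finset (Set Pt)) (r : Fin n → ℂ)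
    (i j : Fin n) (U : Set Pt) : Set Pt →₀ ℂ :=
  -(∑ C ∈ (ch2 α chambers).filter
      (fun C => (∀ x ∈ C, 0 < (α i).eval x) ∧ ∀ x ∈ C, (α j).eval x < 0),
      Finsupp.single C (Delta α r U C)) +
  ∑ C ∈ (ch2 α chambers).filter
      (fun C => (∀ x ∈ C, (α i).eval x < 0) ∧ ∀ x ∈ C, 0 < (α j).eval x),
      Finsupp.single C (Delta α r U C)

/-!
Along the `x₁`-axis each `α i` is `x ↦ c·(x - a i)` with `c > 0` (it vanishes at `a i` and is
negative at the origin), so the points `(x, 0)` with `a_p < x < a_{p+1}` lie in `Upos α p`.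
`Upos α p` is an intersection of open half-planes, hence convex and connected, and every
`α i` has constant sign on a connected subset of the complement; so a chamber meeting
`Upos α p` is `Upos α p`.
-/

namespace AffForm

def toAffineMap (f : AffForm) : Pt →ᵃ[ℝ] ℝ where
  toFun := f.eval
  linear := f.a • LinearMap.fst ℝ ℝ ℝ + f.b • LinearMap.snd ℝ ℝ ℝ
  map_vadd' p v := by
    simp only [eval, vadd_eq_add, Prod.fst_add, Prod.snd_add, LinearMap.add_apply,
      LinearMap.smul_apply, LinearMap.fst_apply, LinearMap.snd_apply, smul_eq_mul]
    ring

@[simp]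
theorem coe_toAffineMap (f : AffForm) : ⇑f.toAffineMap = f.eval := rfl

theorem continuous_eval (f : AffForm) : Continuous f.eval := by
  unfold eval; fun_prop

end AffForm

theorem IsPreconnected.pos_of_pos {X : Type*} [TopologicalSpace X] {T : Set X} {g : X → ℝ}
    (hT : IsPreconnected T) (hg : ContinuousOn g T) (hne : ∀ z ∈ T, g z ≠ 0) {x y : X}
    (hx : x ∈ T) (hy : y ∈ T) (hy0 : 0 < g y) : 0 < g x := by
  by_contra! hx0
  obtain ⟨z, hz, hgz⟩ := hT.intermediate_value hx hy hg ⟨hx0, hy0.le⟩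
  exact hne z hz hgz

theorem Upos_eq_iInter (α : Fin n → AffForm) (p : ℕ) :
    Upos α p = ⋂ i, (α i).toAffineMap ⁻¹' if (i : ℕ) < p then Set.Ioi 0 else Set.Iio 0 := by
  ext x
  simp only [Upos, Set.mem_ofPred_eq, Set.mem_iInter, Set.mem_preimage,
    AffForm.coe_toAffineMap]
  refine forall_congr' fun i => ?_
  split_ifs <;> rfl

theorem convex_Upos (α : Fin n → AffForm) (p : ℕ) : Convex ℝ (Upos α p) := by
  rw [Upos_eq_iInter]
  refine convex_iInter fun i => Convex.affine_preimage _ ?_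
  split_ifs
  exacts [convex_Ioi 0, convex_Iio 0]

theorem Upos_subset_complement (α : Fin n → AffForm) (p : ℕ) :
    Upos α p ⊆ complement α := by
  intro x hx i
  have hxi := hx i
  split_ifs at hxi
  exacts [hxi.ne', hxi.ne]

theorem Upos_eq_connectedComponentIn {α : Fin n → AffForm} {p : ℕ} {q : Pt}
    (hq : q ∈ Upos α p) : Upos α p = connectedComponentIn (complement α) q := by
  refine (convex_Upos α p).isPreconnected.subset_connectedComponentIn hq
    (Upos_subset_complement α p) |>.antisymm fun x hx i => ?_
  have hsub := connectedComponentIn_subset (complement α) q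
  have hq' := mem_connectedComponentIn (Upos_subset_complement α p hq)
  have sign_pos (y z : Pt) (hy : y ∈ connectedComponentIn (complement α) q)
      (hz : z ∈ connectedComponentIn (complement α) q) (hz0 : 0 < (α i).eval z) :
      0 < (α i).eval y :=
    isPreconnected_connectedComponentIn.pos_of_pos (α i).continuous_eval.continuousOn
      (fun w hw => hsub hw i) hy hz hz0
  have hqi := hq i
  split_ifs at hqi ⊢
  · exact sign_pos x q hx hq' hqi
  · exact (hsub hx i).lt_or_gt.resolve_right fun hx0 => (sign_pos q x hq' hx hx0).not_gt hqi

theorem isChamber_Upos {α : Fin n → AffForm} {p : ℕ} {q : Pt} (hq : q ∈ Upos α p) :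
    IsChamber α (Upos α p) :=
  ⟨q, Upos_subset_complement α p hq, Upos_eq_connectedComponentIn hq⟩

namespace GoodCoords

variable {α : Fin n → AffForm} {a : Fin n → ℝ}

theorem strictMono (hco : GoodCoords α a) : StrictMono a := hco.2.2.1

theorem pos (hco : GoodCoords α a) (i : Fin n) : 0 < a i := hco.2.2.2.1 i

theorem eval_axis (hco : GoodCoords α a) (i : Fin n) :
    0 < (α i).a ∧ ∀ x : ℝ, (α i).eval (x, 0) = (α i).a * (x - a i) := by
  obtain ⟨-, hline, -, hapos, hneg⟩ := hco
  have hroot : (α i).a * a i + (α i).b * 0 + (α i).c = 0 := by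
    have hmem : (a i, (0 : ℝ)) ∈ (α i).line ∩ {p : Pt | p.2 = 0} := by
      rw [hline i]; rfl
    exact hmem.1
  have horig : (α i).c < 0 := by simpa [AffForm.eval] using hneg i
  refine ⟨by nlinarith [hapos i], fun x => ?_⟩
  simp only [AffForm.eval]
  linear_combination hroot

theorem mk_mem_Upos (hco : GoodCoords α a) {p : ℕ} {x : ℝ}
    (hlo : ∀ i : Fin n, (i : ℕ) < p → a i < x) (hhi : ∀ i : Fin n, p ≤ (i : ℕ) → x < a i) :
    ((x, 0) : Pt) ∈ Upos α p := by
  intro i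
  obtain ⟨hai, heval⟩ := hco.eval_axis i
  rw [heval]
  split_ifs with hip
  · exact mul_pos hai (sub_pos.mpr (hlo i hip))
  · exact mul_neg_of_pos_of_neg hai (sub_neg.mpr (hhi i (not_lt.mp hip)))

theorem mk_mem_Upos_of_between (hco : GoodCoords α a) {i j : Fin n} {x : ℝ}
    (hij : (i : ℕ) + 1 = j) (hi : a i < x) (hj : x < a j) :
    ((x, 0) : Pt) ∈ Upos α j := by
  refine hco.mk_mem_Upos (fun k hk => ?_) fun k hk => ?_
  · exact (hco.strictMono.monotone (Fin.le_def.mpr (by omega))).trans_lt hi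
  · exact hj.trans_le (hco.strictMono.monotone (Fin.le_def.mpr hk))

end GoodCoords

open Fin.NatCast

theorem statement4_general {m : ℕ} (α : Fin (m + 2) → AffForm) (a : Fin (m + 2) → ℝ)
    (hco : GoodCoords α a)
    (p : ℕ) (hp1 : 1 ≤ p) (hpn : p ≤ m + 1) :
    (Upos α p).Nonempty ∧ IsChamber α (Upos α p) ∧
    (∀ x : ℝ, a ↑(p - 1) < x → x < a ↑p →
      ((x, (0 : ℝ)) : Pt) ∈ Upos α p ∧
      Upos α p = connectedComponentIn (complement α) ((x, (0 : ℝ)) : Pt)) ∧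
    (((0 : ℝ), (0 : ℝ)) : Pt) ∈ Upos α 0 ∧ IsChamber α (Upos α 0) ∧
    Upos α 0 = connectedComponentIn (complement α) (((0 : ℝ), (0 : ℝ)) : Pt) ∧
    IsChamber α (Upos α (m + 2)) ∧
    (∀ x : ℝ, a ↑(m + 1) < x →
      ((x, (0 : ℝ)) : Pt) ∈ Upos α (m + 2) ∧
      Upos α (m + 2) = connectedComponentIn (complement α) ((x, (0 : ℝ)) : Pt)) := by
  have hprev : ((↑(p - 1) : Fin (m + 2)) : ℕ) = p - 1 := Fin.val_cast_of_lt (by omega)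
  have hcur : ((↑p : Fin (m + 2)) : ℕ) = p := Fin.val_cast_of_lt (by omega)
  have hgap : ∀ x, a ↑(p - 1) < x → x < a ↑p → ((x, 0) : Pt) ∈ Upos α p := fun x h₁ h₂ =>
    hcur ▸ hco.mk_mem_Upos_of_between (by omega) h₁ h₂
  have htop : ∀ x, a ↑(m + 1) < x → ((x, 0) : Pt) ∈ Upos α (m + 2) := fun x hx =>
    hco.mk_mem_Upos (fun i _ => (hco.strictMono.monotone (Fin.natCast_eq_last (m + 1) ▸
      Fin.le_last i)).trans_lt hx) fun i hi => absurd i.isLt (by omega)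
  have horig : ((0, 0) : Pt) ∈ Upos α 0 :=
    hco.mk_mem_Upos (fun _ h => absurd h (Nat.not_lt_zero _)) fun i _ => hco.pos i
  obtain ⟨x, hx₁, hx₂⟩ := exists_between (hco.strictMono (Fin.lt_def.mpr (by omega)) :
    a ↑(p - 1) < a ↑p)
  refine ⟨⟨_, hgap x hx₁ hx₂⟩, isChamber_Upos (hgap x hx₁ hx₂),
    fun x h₁ h₂ => ⟨hgap x h₁ h₂, Upos_eq_connectedComponentIn (hgap x h₁ h₂)⟩,
    horig, isChamber_Upos horig, Upos_eq_connectedComponentIn horig,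
    isChamber_Upos (htop _ (lt_add_one _)),
    fun x hx => ⟨htop x hx, Upos_eq_connectedComponentIn (htop x hx)⟩⟩

/-- (Lines indexed by `Fin (m+2)`, i.e. `n = m + 2 ≥ 2` lines, `1`-indexed
as `H_p ↔ α ↑(p-1)`.) For each `p ∈ {1, …, n−1}`, the open convex set
`Upos α p = ∩_{i ≤ p} {α_i > 0} ∩ ∩_{i > p} {α_i < 0}` is nonempty and equals the chamber
of `A` containing the open segment `{(x, 0) : a_p < x < a_{p+1}}`. Moreover
`∩_i {α_i < 0}` is the chamber containing the origin, and `∩_i {α_i > 0}` is the chamber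
containing every point `(x, 0)` with `x > a_n`. -/
theorem statement4 {m : ℕ} (α : Fin (m + 2) → AffForm) (a : Fin (m + 2) → ℝ)
    (hA : IsArrangement α) (hco : GoodCoords α a)
    (p : ℕ) (hp1 : 1 ≤ p) (hpn : p ≤ m + 1) :
    (Upos α p).Nonempty ∧ IsChamber α (Upos α p) ∧
    (∀ x : ℝ, a ↑(p - 1) < x → x < a ↑p →
      ((x, (0 : ℝ)) : Pt) ∈ Upos α p ∧
      Upos α p = connectedComponentIn (complement α) ((x, (0 : ℝ)) : Pt)) ∧
    (((0 : ℝ), (0 : ℝ)) : Pt) ∈ Upos α 0 ∧ IsChamber α (Upos α 0) ∧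
    Upos α 0 = connectedComponentIn (complement α) (((0 : ℝ), (0 : ℝ)) : Pt) ∧
    IsChamber α (Upos α (m + 2)) ∧
    (∀ x : ℝ, a ↑(m + 1) < x →
      ((x, (0 : ℝ)) : Pt) ∈ Upos α (m + 2) ∧
      Upos α (m + 2) = connectedComponentIn (complement α) ((x, (0 : ℝ)) : Pt)) :=
  statement4_general α a hco p hp1 hpn

end
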